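/- Suppose the flow has no normal component, i.e. μ = 0, so ∂γ/∂t = νT + αB. Then the bending energy I₂(t) = ∫₀^L k(s,t)² ds satisfies dI₂/dt = 2 ∫₀^L (2k² ∂ν/∂s + k (∂k/∂s) ν − 2kτ ∂α/∂s − kα ∂τ/∂s) ds. -/

import Mathlib

open scoped BigOperators RealInnerProductSpace
open Complex

noncomputable section

abbrev E3 : Type := EuclideanSpace ℝ (Fin 3)

/-- Partial derivative with respect to the first (arclength) variable. -/
noncomputable def dS {V : Type} [NormedAddCommGroup V] [NormedSpace ℝ V]
    (F : ℝ → ℝ → V) : ℝ → ℝ → V := fun s t => deriv (fun x => F x t) s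

/-- Partial derivative with respect to the second (time) variable. -/
noncomputable def dT {V : Type} [NormedAddCommGroup V] [NormedSpace ℝ V]
    (F : ℝ → ℝ → V) : ℝ → ℝ → V := fun s t => deriv (fun x => F s x) t

/-- Complexification of a real vector in `ℝ³`. -/
noncomputable def cvec (v : E3) : Fin 3 → ℂ := fun i => (v i : ℂ)

/-- Bilinear extension of the real inner product to `ℂ³`. -/
noncomputable def cip (u v : Fin 3 → ℂ) : ℂ := ∑ i, u i * v i

/-- The phase `θ(s,t) = ∫₀^s τ(s',t) ds'`. -/
noncomputable def θf (τ : ℝ → ℝ → ℝ) : ℝ → ℝ → ℝ :=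
  fun s t => ∫ x in (0:ℝ)..s, τ x t

/-- The Hasimoto wave function `ψ = k e^{iθ}`. -/
noncomputable def ψf (k τ : ℝ → ℝ → ℝ) : ℝ → ℝ → ℂ :=
  fun s t => (k s t : ℂ) * Complex.exp (Complex.I * (θf τ s t : ℂ))

/-- The complexified frame vector `M = (N + iB) e^{iθ}`. -/
noncomputable def Mf (N B : ℝ → ℝ → E3) (τ : ℝ → ℝ → ℝ) : ℝ → ℝ → (Fin 3 → ℂ) :=
  fun s t => Complex.exp (Complex.I * (θf τ s t : ℂ)) •
    (cvec (N s t) + Complex.I • cvec (B s t))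

/-- `ω = ⟨∂M/∂t, T⟩` (bilinear inner product). -/
noncomputable def ωf (T N B : ℝ → ℝ → E3) (τ : ℝ → ℝ → ℝ) : ℝ → ℝ → ℂ :=
  fun s t => cip (dT (Mf N B τ) s t) (cvec (T s t))

section aux
variable {V : Type} [NormedAddCommGroup V] [NormedSpace ℝ V] {F : ℝ → ℝ → V}

lemma dS_eq (hF : ContDiff ℝ (⊤ : ℕ∞) (Function.uncurry F)) (s t : ℝ) :
    dS F s t = fderiv ℝ (Function.uncurry F) (s, t) (1, 0) := by
  have h1 : HasDerivAt (fun x : ℝ => (x, t)) ((1:ℝ), (0:ℝ)) s :=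
    (hasDerivAt_id s).prodMk (hasDerivAt_const s t)
  exact ((hF.differentiable (by simp) (s, t)).hasFDerivAt.comp_hasDerivAt s h1).deriv

lemma hasDerivAt_dS (hF : ContDiff ℝ (⊤ : ℕ∞) (Function.uncurry F)) (s t : ℝ) :
    HasDerivAt (fun x => F x t) (dS F s t) s := by
  rw [dS_eq hF]
  have h1 : HasDerivAt (fun x : ℝ => (x, t)) ((1:ℝ), (0:ℝ)) s :=
    (hasDerivAt_id s).prodMk (hasDerivAt_const s t)
  exact (hF.differentiable (by simp) (s, t)).hasFDerivAt.comp_hasDerivAt s h1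

lemma dT_eq (hF : ContDiff ℝ (⊤ : ℕ∞) (Function.uncurry F)) (s t : ℝ) :
    dT F s t = fderiv ℝ (Function.uncurry F) (s, t) (0, 1) := by
  have h1 : HasDerivAt (fun x : ℝ => (s, x)) ((0:ℝ), (1:ℝ)) t :=
    (hasDerivAt_const t s).prodMk (hasDerivAt_id t)
  exact ((hF.differentiable (by simp) (s, t)).hasFDerivAt.comp_hasDerivAt t h1).deriv

lemma hasDerivAt_dT (hF : ContDiff ℝ (⊤ : ℕ∞) (Function.uncurry F)) (s t : ℝ) :
    HasDerivAt (fun x => F s x) (dT F s t) t := by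
  rw [dT_eq hF]
  have h1 : HasDerivAt (fun x : ℝ => (s, x)) ((0:ℝ), (1:ℝ)) t :=
    (hasDerivAt_const t s).prodMk (hasDerivAt_id t)
  exact (hF.differentiable (by simp) (s, t)).hasFDerivAt.comp_hasDerivAt t h1

lemma contDiff_dS (hF : ContDiff ℝ (⊤ : ℕ∞) (Function.uncurry F)) :
    ContDiff ℝ (⊤ : ℕ∞) (Function.uncurry (dS F)) := by
  have : Function.uncurry (dS F) = fun p : ℝ × ℝ => fderiv ℝ (Function.uncurry F) p (1, 0) := by
    funext p
    exact dS_eq hF p.1 p.2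
  rw [this]
  exact (hF.fderiv_right (by simp)).clm_apply contDiff_const
end aux

lemma keyDeriv (T N B : ℝ → ℝ → E3) (k τ ν α : ℝ → ℝ → ℝ)
    (hTsm : ContDiff ℝ (⊤ : ℕ∞) (Function.uncurry T))
    (hNsm : ContDiff ℝ (⊤ : ℕ∞) (Function.uncurry N))
    (hBsm : ContDiff ℝ (⊤ : ℕ∞) (Function.uncurry B))
    (hksm : ContDiff ℝ (⊤ : ℕ∞) (Function.uncurry k))
    (hτsm : ContDiff ℝ (⊤ : ℕ∞) (Function.uncurry τ))
    (hνsm : ContDiff ℝ (⊤ : ℕ∞) (Function.uncurry ν))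
    (hαsm : ContDiff ℝ (⊤ : ℕ∞) (Function.uncurry α))
    (horth : ∀ s t, ⟪T s t, T s t⟫ = 1 ∧ ⟪N s t, N s t⟫ = 1 ∧
      ⟪B s t, B s t⟫ = 1 ∧ ⟪T s t, N s t⟫ = 0 ∧
      ⟪T s t, B s t⟫ = 0 ∧ ⟪N s t, B s t⟫ = 0)
    (hFS1 : ∀ s t, dS T s t = k s t • N s t)
    (hFS2 : ∀ s t, dS N s t = -(k s t) • T s t + τ s t • B s t)
    (hFS3 : ∀ s t, dS B s t = -(τ s t) • N s t)
    (hTt : ∀ s t, dT T s t = dS ν s t • T s t +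
      (ν s t * k s t - α s t * τ s t) • N s t + dS α s t • B s t)
    (hmixT : ∀ s t, dS (dT T) s t = dT (dS T) s t)
    (s t : ℝ) :
    HasDerivAt (fun t' => (k s t')^2)
      (2 * (2 * (k s t)^2 * dS ν s t + k s t * dS k s t * ν s t -
        2 * k s t * τ s t * dS α s t - k s t * α s t * dS τ s t)) t := by
  -- smoothness of dS T
  have hdST : dS T = fun s t => k s t • N s t := funext fun s => funext fun t => hFS1 s t
  have hdSTsm : ContDiff ℝ (⊤ : ℕ∞) (Function.uncurry (dS T)) := by
    rw [hdST]; exact hksm.smul hNsm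
  -- k = ⟪dS T, N⟫
  have hkeq : ∀ t', k s t' = ⟪dS T s t', N s t'⟫ := by
    intro t'
    rw [hFS1, real_inner_smul_left, (horth s t').2.1, mul_one]
  -- derivative of k in t
  have hN' := hasDerivAt_dT hNsm s t
  have hST' := hasDerivAt_dT hdSTsm s t
  have Hin := (HasDerivAt.inner ℝ hST' hN')
  have hkfun : (fun t' => k s t') = fun x => ⟪dS T s x, N s x⟫ := funext hkeq
  -- value of ⟪dS T, dT N⟫ : zero
  have hNN0 : ⟪N s t, dT N s t⟫ = 0 := by
    have h1 : HasDerivAt (fun x => ⟪N s x, N s x⟫) (⟪N s t, dT N s t⟫ + ⟪dT N s t, N s t⟫) t :=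
      HasDerivAt.inner ℝ hN' hN'
    have h2 : (fun x => ⟪N s x, N s x⟫) = fun _ => (1:ℝ) :=
      funext fun x => (horth s x).2.1
    rw [h2] at h1
    have h3 := (hasDerivAt_const t (1:ℝ)).unique h1
    have h4 : ⟪dT N s t, N s t⟫ = 0 := by linarith [h3, real_inner_comm (N s t) (dT N s t)]
    rw [real_inner_comm]
    exact h4
  -- the first inner product term
  have hdTT : (fun x => dT T x t) = fun x => dS ν x t • T x t +
      (ν x t * k x t - α x t * τ x t) • N x t + dS α x t • B x t :=
    funext fun x => hTt x t
  have hν' := hasDerivAt_dS (contDiff_dS hνsm) s t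
  have hα' := hasDerivAt_dS (contDiff_dS hαsm) s t
  have hT2 := hasDerivAt_dS hTsm s t
  have hN2 := hasDerivAt_dS hNsm s t
  have hB2 := hasDerivAt_dS hBsm s t
  have hνs := hasDerivAt_dS hνsm s t
  have hks := hasDerivAt_dS hksm s t
  have hαs := hasDerivAt_dS hαsm s t
  have hτs := hasDerivAt_dS hτsm s t
  have Hmid : HasDerivAt (fun x => ν x t * k x t - α x t * τ x t)
      ((dS ν s t * k s t + ν s t * dS k s t) - (dS α s t * τ s t + α s t * dS τ s t)) s :=
    (hνs.mul hks).sub (hαs.mul hτs)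
  have HA : HasDerivAt (fun x => dS ν x t • T x t +
      (ν x t * k x t - α x t * τ x t) • N x t + dS α x t • B x t)
      ((dS ν s t • dS T s t + dS (dS ν) s t • T s t) +
       ((ν s t * k s t - α s t * τ s t) • dS N s t +
        ((dS ν s t * k s t + ν s t * dS k s t) - (dS α s t * τ s t + α s t * dS τ s t)) • N s t) +
       (dS α s t • dS B s t + dS (dS α) s t • B s t)) s :=
    ((hν'.smul hT2).add (Hmid.smul hN2)).add (hα'.smul hB2)
  have hval : dS (dT T) s t = (dS ν s t • dS T s t + dS (dS ν) s t • T s t) +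
       ((ν s t * k s t - α s t * τ s t) • dS N s t +
        ((dS ν s t * k s t + ν s t * dS k s t) - (dS α s t * τ s t + α s t * dS τ s t)) • N s t) +
       (dS α s t • dS B s t + dS (dS α) s t • B s t) := by
    show deriv (fun x => dT T x t) s = _
    rw [hdTT]
    exact HA.deriv
  -- inner with N
  obtain ⟨hTT, hNN, hBB, hTN, hTB, hNB⟩ := horth s t
  have hBN : ⟪B s t, N s t⟫ = 0 := by rw [real_inner_comm]; exact hNB
  have hNTs : ⟪dS T s t, N s t⟫ = k s t := (hkeq t).symm
  have hNNs : ⟪dS N s t, N s t⟫ = 0 := by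
    rw [hFS2, inner_add_left, real_inner_smul_left, real_inner_smul_left, hTN, hBN]
    ring
  have hBNs : ⟪dS B s t, N s t⟫ = -(τ s t) := by
    rw [hFS3, real_inner_smul_left, hNN]; ring
  have hfirst : ⟪dS (dT T) s t, N s t⟫ =
      2 * k s t * dS ν s t + ν s t * dS k s t - 2 * τ s t * dS α s t - α s t * dS τ s t := by
    rw [hval]
    simp only [inner_add_left, real_inner_smul_left]
    rw [hTN, hNN, hBN, hNTs, hNNs, hBNs]
    ring
  -- assemble derivative of k
  have hk' : HasDerivAt (fun t' => k s t')
      (2 * k s t * dS ν s t + ν s t * dS k s t - 2 * τ s t * dS α s t - α s t * dS τ s t) t := by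
    rw [hkfun]
    refine Hin.congr_deriv ?_
    rw [hFS1, real_inner_smul_left, hNN0, mul_zero, ← hmixT, hfirst]
    ring
  have := hk'.fun_pow 2
  refine this.congr_deriv ?_
  push_cast
  ring

theorem stmt17
    (γ T N B : ℝ → ℝ → E3) (k τ : ℝ → ℝ → ℝ)
    (hγsm : ContDiff ℝ (⊤ : ℕ∞) (Function.uncurry γ))
    (hTsm : ContDiff ℝ (⊤ : ℕ∞) (Function.uncurry T))
    (hNsm : ContDiff ℝ (⊤ : ℕ∞) (Function.uncurry N))
    (hBsm : ContDiff ℝ (⊤ : ℕ∞) (Function.uncurry B))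
    (hksm : ContDiff ℝ (⊤ : ℕ∞) (Function.uncurry k))
    (hτsm : ContDiff ℝ (⊤ : ℕ∞) (Function.uncurry τ))
    (hkpos : ∀ s t, 0 < k s t)
    (hTdef : ∀ s t, dS γ s t = T s t)
    (horth : ∀ s t, ⟪T s t, T s t⟫ = 1 ∧ ⟪N s t, N s t⟫ = 1 ∧
      ⟪B s t, B s t⟫ = 1 ∧ ⟪T s t, N s t⟫ = 0 ∧
      ⟪T s t, B s t⟫ = 0 ∧ ⟪N s t, B s t⟫ = 0)
    (hFS1 : ∀ s t, dS T s t = k s t • N s t)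
    (hFS2 : ∀ s t, dS N s t = -(k s t) • T s t + τ s t • B s t)
    (hFS3 : ∀ s t, dS B s t = -(τ s t) • N s t)
    (ν μ α : ℝ → ℝ → ℝ)
    (hνsm : ContDiff ℝ (⊤ : ℕ∞) (Function.uncurry ν))
    (hμsm : ContDiff ℝ (⊤ : ℕ∞) (Function.uncurry μ))
    (hαsm : ContDiff ℝ (⊤ : ℕ∞) (Function.uncurry α))
    (hkin : ∀ s t, dT γ s t = ν s t • T s t + μ s t • N s t + α s t • B s t)
    (hmixγ : ∀ s t, dS (dT γ) s t = dT (dS γ) s t)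
    (hmixT : ∀ s t, dS (dT T) s t = dT (dS T) s t)
    (hmixN : ∀ s t, dS (dT N) s t = dT (dS N) s t)
    (hmixB : ∀ s t, dS (dT B) s t = dT (dS B) s t)
    (hμ0 : ∀ s t, μ s t = 0)
    (L : ℝ) (hL : 0 < L)
    :
    ∀ t, HasDerivAt (fun t' => ∫ s in (0:ℝ)..L, (k s t')^2)
      (2 * ∫ s in (0:ℝ)..L, (2 * (k s t)^2 * dS ν s t + k s t * dS k s t * ν s t -
        2 * k s t * τ s t * dS α s t - k s t * α s t * dS τ s t)) t := by

  intro t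
  -- kinematic formula with μ = 0
  have hμkin : ∀ s t, dT γ s t = ν s t • T s t + α s t • B s t := by
    intro s t
    rw [hkin s t, hμ0 s t, zero_smul, add_zero]
  -- formula for dT T
  have hTt : ∀ s t, dT T s t = dS ν s t • T s t +
      (ν s t * k s t - α s t * τ s t) • N s t + dS α s t • B s t := by
    intro s t
    have hTγ : T = dS γ := (funext fun s => funext fun t => (hTdef s t)).symm
    have h1 : dT T s t = dS (dT γ) s t := by
      conv_lhs => rw [hTγ]
      exact (hmixγ s t).symm
    have hG : (fun x => dT γ x t) = fun x => ν x t • T x t + α x t • B x t :=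
      funext fun x => hμkin x t
    have hνs := hasDerivAt_dS hνsm s t
    have hαs := hasDerivAt_dS hαsm s t
    have hT2 := hasDerivAt_dS hTsm s t
    have hB2 := hasDerivAt_dS hBsm s t
    have H : HasDerivAt (fun x => ν x t • T x t + α x t • B x t)
        ((ν s t • dS T s t + dS ν s t • T s t) + (α s t • dS B s t + dS α s t • B s t)) s :=
      (hνs.smul hT2).add (hαs.smul hB2)
    rw [h1]
    show deriv (fun x => dT γ x t) s = _
    rw [hG, H.deriv, hFS1, hFS3]
    match_scalars <;> ring
  have key : ∀ s t, HasDerivAt (fun t' => (k s t')^2)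
      (2 * (2 * (k s t)^2 * dS ν s t + k s t * dS k s t * ν s t -
        2 * k s t * τ s t * dS α s t - k s t * α s t * dS τ s t)) t :=
    keyDeriv T N B k τ ν α hTsm hNsm hBsm hksm hτsm hνsm hαsm horth hFS1 hFS2 hFS3 hTt hmixT
  -- continuity facts
  have ck : Continuous fun p : ℝ × ℝ => k p.1 p.2 := hksm.continuous
  have cτ : Continuous fun p : ℝ × ℝ => τ p.1 p.2 := hτsm.continuous
  have cν : Continuous fun p : ℝ × ℝ => ν p.1 p.2 := hνsm.continuous
  have cα : Continuous fun p : ℝ × ℝ => α p.1 p.2 := hαsm.continuous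
  have cdk : Continuous fun p : ℝ × ℝ => dS k p.1 p.2 := (contDiff_dS hksm).continuous
  have cdτ : Continuous fun p : ℝ × ℝ => dS τ p.1 p.2 := (contDiff_dS hτsm).continuous
  have cdν : Continuous fun p : ℝ × ℝ => dS ν p.1 p.2 := (contDiff_dS hνsm).continuous
  have cdα : Continuous fun p : ℝ × ℝ => dS α p.1 p.2 := (contDiff_dS hαsm).continuous
  have hc : Continuous (fun p : ℝ × ℝ => 2 * (2 * (k p.1 p.2)^2 * dS ν p.1 p.2 +
      k p.1 p.2 * dS k p.1 p.2 * ν p.1 p.2 - 2 * k p.1 p.2 * τ p.1 p.2 * dS α p.1 p.2 -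
      k p.1 p.2 * α p.1 p.2 * dS τ p.1 p.2)) :=
    continuous_const.mul
      (((((continuous_const.mul (ck.pow 2)).mul cdν).add (((ck.mul cdk)).mul cν)).sub
        (((continuous_const.mul ck).mul cτ).mul cdα)).sub ((ck.mul cα).mul cdτ))
  -- bound on a compact neighborhood
  have hcpt : IsCompact ((Set.uIcc (0:ℝ) L) ×ˢ Metric.closedBall t 1) :=
    isCompact_uIcc.prod (isCompact_closedBall t 1)
  obtain ⟨C, hC⟩ := hcpt.exists_bound_of_continuousOn hc.continuousOn
  have hslice : ∀ x : ℝ, Continuous fun s => (k s x)^2 := fun x =>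
    (ck.comp (continuous_id.prodMk continuous_const)).pow 2
  have main := intervalIntegral.hasDerivAt_integral_of_dominated_loc_of_deriv_le
    (F := fun x s => (k s x)^2)
    (F' := fun x s => 2 * (2 * (k s x)^2 * dS ν s x + k s x * dS k s x * ν s x -
        2 * k s x * τ s x * dS α s x - k s x * α s x * dS τ s x))
    (x₀ := t) (a := (0:ℝ)) (b := L) (bound := fun _ => C) (s := Metric.ball t 1) (μ := MeasureTheory.volume) (Metric.ball_mem_nhds t one_pos)
    (Filter.Eventually.of_forall fun x => ((hslice x).aestronglyMeasurable))
    ((hslice t).intervalIntegrable 0 L)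
    ((hc.comp (continuous_id.prodMk continuous_const)).aestronglyMeasurable)
    (Filter.Eventually.of_forall fun s hs x hx =>
      hC (s, x) ⟨Set.uIoc_subset_uIcc hs, Metric.ball_subset_closedBall hx⟩)
    (intervalIntegrable_const)
    (Filter.Eventually.of_forall fun s _ x _ => key s x)
  have h2 := main.2
  rw [← intervalIntegral.integral_const_mul]
  exact h2
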